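/- Let R be an F_p-algebra with flat Frobenius φ, let (M, f : M → φ*M) be an R-module with a map to its Frobenius twist, and let M^unit be its unitalization. Then for any R[F]-module N, the map Hom_{R[F]}(M^unit, N) → Hom_R(M, N) given by restriction along M → M^unit identifies Hom_{R[F]}(M^unit, N) with the equalizer of the two maps Hom_R(M, N) ⇉ Hom_R(M, N), the first the identity and the second sending v : M → N to the composite M →f φ*M →φ*v φ*N →F N. -/
import Mathlib


/-- A copy of `R` viewed as an `R`-algebra via the Frobenius `φ : R → R`; flatness of the
Frobenius is expressed as flatness of `Rphi p R` as an `R`-module. -/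
def Rphi (_p : ℕ) (R : Type u) : Type u := R

instance Rphi.instCommRing (p : ℕ) (R : Type u) [CommRing R] : CommRing (Rphi p R) :=
  ‹CommRing R›

noncomputable instance Rphi.instAlgebra (p : ℕ) (R : Type u) [CommRing R] [Fact p.Prime]
    [CharP R p] : Algebra R (Rphi p R) :=
  RingHom.toAlgebra (S := Rphi p R) (frobenius R p)

/-- Composite transition maps of a tower `N 0 → N 1 → ⋯`. -/
def tIter {R : Type u} [CommRing R] (N : ℕ → Type v) [∀ n, AddCommGroup (N n)]
    [∀ n, Module R (N n)] (t : ∀ n, N n →ₗ[R] N (n + 1)) (n : ℕ) :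
    (k : ℕ) → N n → N (n + k)
  | 0 => fun x => x
  | k + 1 => fun x => t (n + k) (tIter N t n k x)

/-- Let `R` be an `F_p`-algebra with flat Frobenius, `(M, f : M → φ*M)` an
`R`-module with a map to its Frobenius twist, and `M^unit` its unitalization.  Then for any
`R[F]`-module `(Y, FY)`, restriction along `M → M^unit` identifies `Hom_{R[F]}(M^unit, Y)`
with the equalizer of the two maps `Hom_R(M, Y) ⇉ Hom_R(M, Y)`, the first the identity and
the second sending `v : M → Y` to the composite `M →f φ*M →φ*v φ*Y →F Y`.

Encoding (as in the unitalization construction): `N 0` plays the role of `M`; `j n` is the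
canonical semilinear map `N n → φ*(N n) = N (n+1)`, characterized by its universal property;
`t 0 = f`, `t (n+1) = φ*(t n)`; `(C, g, FC)` is the unitalization with its canonical
semilinear operator.  The composite `F ∘ φ*v : φ*M → Y` is characterized (via the
universal property of `j 0`) as the unique linear `w : N 1 → Y` with `w ∘ j 0 = FY ∘ v`,
so the equalizer condition on `v` reads: for every such `w`, `v = w ∘ t 0`.  The
identification is expressed by: (i) restriction `h ↦ h ∘ g 0` is injective on
`F`-compatible maps, and (ii) `v` is such a restriction iff it satisfies the equalizer
condition. -/
theorem stmt14 (p : ℕ) [Fact p.Prime] (R : Type u) [CommRing R] [CharP R p]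
    [Module.Flat R (Rphi p R)]
    (N : ℕ → Type u) [∀ n, AddCommGroup (N n)] [∀ n, Module R (N n)]
    (j : ∀ n, N n → N (n + 1))
    (hjadd : ∀ n x y, j n (x + y) = j n x + j n y)
    (hjsemi : ∀ n (r : R) (x : N n), j n (r • x) = r ^ p • j n x)
    (hjuniv : ∀ (n : ℕ) (Y : Type u) [AddCommGroup Y] [Module R Y] (gq : N n → Y),
      (∀ x y, gq (x + y) = gq x + gq y) → (∀ (r : R) (x : N n), gq (r • x) = r ^ p • gq x) →
      ∃! h : N (n + 1) →ₗ[R] Y, ∀ x, h (j n x) = gq x)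
    (t : ∀ n, N n →ₗ[R] N (n + 1))
    (hcompat : ∀ n (x : N n), t (n + 1) (j n x) = j (n + 1) (t n x))
    (C : Type u) [AddCommGroup C] [Module R C] (g : ∀ n, N n →ₗ[R] C)
    (hg : ∀ n (x : N n), g (n + 1) (t n x) = g n x)
    (hsurj : ∀ c : C, ∃ n, ∃ x : N n, g n x = c)
    (hker : ∀ n (x : N n), g n x = 0 → ∃ k, tIter N t n k x = 0)
    (FC : C → C)
    (hFCadd : ∀ x y, FC (x + y) = FC x + FC y)
    (hFCsemi : ∀ (r : R) (c : C), FC (r • c) = r ^ p • FC c)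
    (hFCg : ∀ n (x : N n), FC (g n x) = g (n + 1) (j n x))
    (Y : Type u) [AddCommGroup Y] [Module R Y] (FY : Y → Y)
    (hFYadd : ∀ x y, FY (x + y) = FY x + FY y)
    (hFYsemi : ∀ (r : R) (y : Y), FY (r • y) = r ^ p • FY y) :
    (∀ h₁ h₂ : C →ₗ[R] Y, (∀ c, h₁ (FC c) = FY (h₁ c)) → (∀ c, h₂ (FC c) = FY (h₂ c)) →
      (∀ x : N 0, h₁ (g 0 x) = h₂ (g 0 x)) → h₁ = h₂) ∧
    (∀ v : N 0 →ₗ[R] Y,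
      (∃ h : C →ₗ[R] Y, (∀ c, h (FC c) = FY (h c)) ∧ ∀ x : N 0, h (g 0 x) = v x) ↔
      (∀ w : N 1 →ₗ[R] Y, (∀ m : N 0, w (j 0 m) = FY (v m)) →
        ∀ m : N 0, v m = w (t 0 m))) := by
  classical
  -- extensionality along `j n`
  have hext : ∀ (n : ℕ) (h₁ h₂ : N (n + 1) →ₗ[R] Y),
      (∀ x, h₁ (j n x) = h₂ (j n x)) → h₁ = h₂ := by
    intro n h₁ h₂ hagree
    obtain ⟨h, hh, huniq⟩ := hjuniv n Y (fun x => h₁ (j n x))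
      (by intro x y; show h₁ (j n (x + y)) = h₁ (j n x) + h₁ (j n y); rw [hjadd, map_add])
      (by intro r x; show h₁ (j n (r • x)) = r ^ p • h₁ (j n x); rw [hjsemi, map_smul])
    rw [huniq h₁ (fun x => rfl), huniq h₂ (fun x => (hagree x).symm)]
  have hgIter : ∀ (n k : ℕ) (x : N n), g (n + k) (tIter N t n k x) = g n x := by
    intro n k
    induction k with
    | zero => intro x; rfl
    | succ k ih => intro x; show g (n + k + 1) (t (n + k) _) = _; rw [hg, ih]
  constructor
  · -- injectivity
    intro h₁ h₂ hF1 hF2 h0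
    have hn : ∀ (n : ℕ) (x : N n), h₁ (g n x) = h₂ (g n x) := by
      intro n
      induction n with
      | zero => exact h0
      | succ n ih =>
        have heq : h₁.comp (g (n + 1)) = h₂.comp (g (n + 1)) := by
          apply hext n
          intro x
          simp only [LinearMap.comp_apply]
          rw [← hFCg, hF1, hF2, ih x]
        intro x
        exact LinearMap.congr_fun heq x
    apply LinearMap.ext
    intro c
    obtain ⟨n, x, rfl⟩ := hsurj c
    exact hn n x
  · intro v
    constructor
    · -- forward
      rintro ⟨h, hF, hv⟩ w hw m
      have heq : h.comp (g 1) = w := by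
        apply hext 0
        intro x
        simp only [LinearMap.comp_apply]
        rw [← hFCg, hF, hv, hw]
      have := LinearMap.congr_fun heq (t 0 m)
      simp only [LinearMap.comp_apply] at this
      rw [← this, hg, hv]
    · -- backward: construct h
      intro hv
      have gqprop : ∀ (n : ℕ) (u : N n →ₗ[R] Y),
          ∃! h : N (n + 1) →ₗ[R] Y, ∀ x, h (j n x) = FY (u x) := fun n u =>
        hjuniv n Y (fun x => FY (u x))
          (by intro x y; show FY (u (x + y)) = FY (u x) + FY (u y); rw [map_add, hFYadd])
          (by intro r x; show FY (u (r • x)) = r ^ p • FY (u x); rw [map_smul, hFYsemi])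
      let vs : ∀ n, N n →ₗ[R] Y := fun n =>
        Nat.rec v (fun n u => (gqprop n u).choose) n
      have hvsj : ∀ (n : ℕ) (x : N n), vs (n + 1) (j n x) = FY (vs n x) :=
        fun n => (gqprop n (vs n)).choose_spec.1
      have hvst : ∀ (n : ℕ) (x : N n), vs (n + 1) (t n x) = vs n x := by
        intro n
        induction n with
        | zero => intro x; exact (hv (vs 1) (fun m => hvsj 0 m) x).symm
        | succ n ih =>
          have heq : (vs (n + 2)).comp (t (n + 1)) = vs (n + 1) := by
            apply hext n
            intro x
            simp only [LinearMap.comp_apply]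
            rw [hcompat, hvsj, ih, hvsj]
          intro x
          exact LinearMap.congr_fun heq x
      have hvsIter : ∀ (n k : ℕ) (x : N n), vs (n + k) (tIter N t n k x) = vs n x := by
        intro n k
        induction k with
        | zero => intro x; rfl
        | succ k ih => intro x; show vs (n + k + 1) (t (n + k) _) = _; rw [hvst, ih]
      have hz : ∀ (n : ℕ) (x : N n), g n x = 0 → vs n x = 0 := by
        intro n x hx
        obtain ⟨k, hk⟩ := hker n x hx
        have h2 := hvsIter n k x
        rw [hk] at h2
        simpa using h2.symm
      have hsame : ∀ (n : ℕ) (x y : N n), g n x = g n y → vs n x = vs n y := by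
        intro n x y hxy
        have h2 : vs n (x - y) = 0 := hz n _ (by rw [map_sub, hxy, sub_self])
        rw [map_sub, sub_eq_zero] at h2
        exact h2
      have hwd : ∀ (n : ℕ) (x : N n) (m : ℕ) (y : N m), g n x = g m y → vs n x = vs m y := by
        have aux : ∀ (n k : ℕ) (x : N n) (y : N (n + k)),
            g n x = g (n + k) y → vs n x = vs (n + k) y := by
          intro n k x y h
          rw [← hvsIter n k x]
          exact hsame (n + k) _ _ (by rw [hgIter, h])
        intro n x m y h
        rcases Nat.le_total n m with hle | hle
        · obtain ⟨k, rfl⟩ := Nat.exists_eq_add_of_le hle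
          exact aux n k x y h
        · obtain ⟨k, rfl⟩ := Nat.exists_eq_add_of_le hle
          exact (aux m k y x h.symm).symm
      have hcommon : ∀ c₁ c₂ : C, ∃ n, ∃ x₁ x₂ : N n, g n x₁ = c₁ ∧ g n x₂ = c₂ := by
        intro c₁ c₂
        obtain ⟨n, x, hx⟩ := hsurj c₁
        obtain ⟨m, y, hy⟩ := hsurj c₂
        rcases Nat.le_total n m with hle | hle
        · obtain ⟨k, rfl⟩ := Nat.exists_eq_add_of_le hle
          exact ⟨n + k, tIter N t n k x, y, by rw [hgIter, hx], hy⟩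
        · obtain ⟨k, rfl⟩ := Nat.exists_eq_add_of_le hle
          exact ⟨m + k, x, tIter N t m k y, hx, by rw [hgIter, hy]⟩
      -- the underlying function
      let hfun : C → Y := fun c => vs (hsurj c).choose (hsurj c).choose_spec.choose
      have hval : ∀ (n : ℕ) (x : N n), hfun (g n x) = vs n x := fun n x =>
        hwd _ _ n x (hsurj (g n x)).choose_spec.choose_spec
      have hadd : ∀ c₁ c₂ : C, hfun (c₁ + c₂) = hfun c₁ + hfun c₂ := by
        intro c₁ c₂
        obtain ⟨n, x₁, x₂, rfl, rfl⟩ := hcommon c₁ c₂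
        rw [← map_add, hval, hval, hval, map_add]
      have hsmul : ∀ (r : R) (c : C), hfun (r • c) = r • hfun c := by
        intro r c
        obtain ⟨n, x, rfl⟩ := hsurj c
        rw [← map_smul, hval, hval, map_smul]
      refine ⟨{ toFun := hfun, map_add' := hadd, map_smul' := hsmul }, ?_, ?_⟩
      · intro c
        obtain ⟨n, x, rfl⟩ := hsurj c
        show hfun (FC (g n x)) = FY (hfun (g n x))
        rw [hFCg, hval, hval, hvsj]
      · intro x
        exact hval 0 x
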